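/- arXiv:2206.00887 — 2 statements merged into one kernel-verified Lean document; each statement's English description precedes it below -/
import Mathlib

section
/- Let (X,‖·‖,τ) be a Saks space with norming directed system Γ_τ of τ-continuous seminorms generating τ. Let 𝒩₁ be the set of all pairs of sequences ((p_n),(a_n)) with (p_n)⊂Γ_τ and (a_n) a real null sequence with 0 ≤ a_n ≤ 1 for all n, and set Γ_{γ_s} := { |||·|||_{(p_n,a_n)} : ((p_n),(a_n))∈𝒩₁ }. Then Γ_{γ_s} is a directed system of continuous seminorms generating the submixed topology γ_s, and Γ_{γ_s} is norming, i.e. ‖x‖ = sup_{q∈Γ_{γ_s}} q(x) for all x∈X. -/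
open Filter Topology Set

namespace LumerPhillips

variable {X : Type*}

section Defs

variable [NormedAddCommGroup X] [NormedSpace ℝ X]

/-- A directed set of seminorms. -/
def DirectedSeminorms (Γ : Set (Seminorm ℝ X)) : Prop :=
  ∀ p ∈ Γ, ∀ q ∈ Γ, ∃ r ∈ Γ, p ≤ r ∧ q ≤ r

/-- `Γ` is a system of `t`-continuous seminorms generating the topology `t`, i.e. `t` is
the locally convex topology induced by the seminorms in `Γ`. -/
def GeneratesTop (Γ : Set (Seminorm ℝ X)) (t : TopologicalSpace X) : Prop :=
  (∀ p ∈ Γ, @Continuous X ℝ t _ p) ∧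
    t = ⨅ p : Γ,
      (p : Seminorm ℝ X).toSeminormedAddCommGroup.toUniformSpace.toTopologicalSpace

/-- `Γ` is norming: the norm is the pointwise supremum of the seminorms in `Γ`. -/
def NormingSeminorms (Γ : Set (Seminorm ℝ X)) : Prop :=
  ∀ x : X, ‖x‖ = ⨆ p : Γ, (p : Seminorm ℝ X) x

/-- `(X,‖·‖,τ)` is a Saks space witnessed by the norming directed system `Γ` of τ-continuous
seminorms generating `τ`; `τ` is a Hausdorff locally convex topology coarser than the norm
topology. -/
def IsSaksSystem (τ : TopologicalSpace X) (Γ : Set (Seminorm ℝ X)) : Prop :=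
  @T2Space X τ ∧ @LocallyConvexSpace ℝ X _ _ _ _ τ ∧
    (inferInstance : TopologicalSpace X) ≤ τ ∧
    DirectedSeminorms Γ ∧ GeneratesTop Γ τ ∧ NormingSeminorms Γ

/-- `t` is a linear (vector space) topology on `X`. -/
def IsLinearTop (t : TopologicalSpace X) : Prop :=
  @IsTopologicalAddGroup X t _ ∧ @ContinuousSMul ℝ X _ _ t

/-- The topologies `t` and `s` agree (as subspace topologies) on every norm-bounded set. -/
def AgreeOnBoundedSets (t s : TopologicalSpace X) : Prop :=
  ∀ S : Set X, Bornology.IsBounded S →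
    TopologicalSpace.induced ((↑) : S → X) t = TopologicalSpace.induced ((↑) : S → X) s

/-- `γ` is the mixed topology `γ(‖·‖,τ)`: the finest linear topology that agrees with `τ` on
norm-bounded sets and lies between `τ` and the norm topology. (Recall that in Mathlib's order
on topologies, `t ≤ s` means `t` is finer than `s`.) -/
def IsMixedTopology (τ γ : TopologicalSpace X) : Prop :=
  (IsLinearTop γ ∧ γ ≤ τ ∧ (inferInstance : TopologicalSpace X) ≤ γ ∧ AgreeOnBoundedSets γ τ) ∧
    ∀ t : TopologicalSpace X, IsLinearTop t → t ≤ τ →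
      (inferInstance : TopologicalSpace X) ≤ t → AgreeOnBoundedSets t τ → γ ≤ t

/-- `u` is a Cauchy sequence for the (group) topology `t`. -/
def CauchySeqTop (t : TopologicalSpace X) (u : ℕ → X) : Prop :=
  ∀ V ∈ @nhds X t 0, ∃ N : ℕ, ∀ m ≥ N, ∀ n ≥ N, u m - u n ∈ V

/-- `(X,t)` is sequentially complete. -/
def SeqCompleteTop (t : TopologicalSpace X) : Prop :=
  ∀ u : ℕ → X, CauchySeqTop t u → ∃ x : X, Filter.Tendsto u atTop (@nhds X t x)

/-- `(X,t)` is complete (every Cauchy filter for the group uniformity of `t` converges). -/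
def CompleteTop (t : TopologicalSpace X) : Prop :=
  ∀ F : Filter X, F.NeBot →
    (∀ V ∈ @nhds X t 0, ∃ S ∈ F, ∀ x ∈ S, ∀ y ∈ S, x - y ∈ V) →
    ∃ x : X, F ≤ @nhds X t x

/-- The map `λ - A` on the domain `D` of the linear operator `A`. -/
def lmap (D : Submodule ℝ X) (A : D →ₗ[ℝ] X) (l : ℝ) : D → X :=
  fun x => l • (x : X) - A x

/-- The operator `(A, D)` is `Γ`-dissipative: `p((λ - A)x) ≥ λ p(x)` for all `λ > 0`,
`x ∈ D` and `p ∈ Γ`. -/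
def GammaDissipative (Γ : Set (Seminorm ℝ X)) (D : Submodule ℝ X) (A : D →ₗ[ℝ] X) : Prop :=
  ∀ l : ℝ, 0 < l → ∀ x : D, ∀ p ∈ Γ, l * p (x : X) ≤ p (lmap D A l x)

/-- The range of `λ - A`. -/
def opRange (D : Submodule ℝ X) (A : D →ₗ[ℝ] X) (l : ℝ) : Set X :=
  Set.range (lmap D A l)

/-- The graph of the operator `(A, D)`. -/
def graphSet (D : Submodule ℝ X) (A : D →ₗ[ℝ] X) : Set (X × X) :=
  {p : X × X | ∃ x : D, p = ((x : X), A x)}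

/-- The operator `(A, D)` is `t`-closed (equivalently: its graph is closed for the product
topology, which is the net formulation of closedness). -/
def ClosedOp (t : TopologicalSpace X) (D : Submodule ℝ X) (A : D →ₗ[ℝ] X) : Prop :=
  @IsClosed (X × X) (@instTopologicalSpaceProd X X t t) (graphSet D A)

/-- The operator `(A, D)` is sequentially `t`-closed. -/
def SeqClosedOp (t : TopologicalSpace X) (D : Submodule ℝ X) (A : D →ₗ[ℝ] X) : Prop :=
  ∀ (u : ℕ → D) (x y : X),
    Filter.Tendsto (fun n => (u n : X)) atTop (@nhds X t x) →
    Filter.Tendsto (fun n => A (u n)) atTop (@nhds X t y) →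
    ∃ hx : x ∈ D, A ⟨x, hx⟩ = y

/-- `(A', D')` is an extension of `(A, D)`. -/
def ExtensionOp (D : Submodule ℝ X) (A : D →ₗ[ℝ] X)
    (D' : Submodule ℝ X) (A' : D' →ₗ[ℝ] X) : Prop :=
  ∃ h : D ≤ D', ∀ x : D, A' ⟨(x : X), h x.2⟩ = A x

/-- `(A', D')` is the `t`-closure of `(A, D)`: the smallest `t`-closed extension. -/
def IsClosureOp (t : TopologicalSpace X) (D : Submodule ℝ X) (A : D →ₗ[ℝ] X)
    (D' : Submodule ℝ X) (A' : D' →ₗ[ℝ] X) : Prop :=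
  ExtensionOp D A D' A' ∧ ClosedOp t D' A' ∧
    ∀ (D'' : Submodule ℝ X) (A'' : D'' →ₗ[ℝ] X),
      ExtensionOp D A D'' A'' → ClosedOp t D'' A'' → ExtensionOp D' A' D'' A''

/-- `T` is a semigroup of linear operators which is strongly continuous for the topology `t`. -/
def IsSemigroupOn (t : TopologicalSpace X) (T : ℝ → X →ₗ[ℝ] X) : Prop :=
  T 0 = LinearMap.id ∧ (∀ s u : ℝ, 0 ≤ s → 0 ≤ u → T (s + u) = (T s).comp (T u)) ∧
    ∀ x : X, @ContinuousOn ℝ X _ t (fun s => T s x) (Set.Ici 0)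

/-- `T` is equicontinuous with respect to the system of seminorms `Γ`. -/
def EquicontOn (Γ : Set (Seminorm ℝ X)) (T : ℝ → X →ₗ[ℝ] X) : Prop :=
  ∀ p ∈ Γ, ∃ q ∈ Γ, ∃ C : ℝ, 0 ≤ C ∧ ∀ s : ℝ, 0 ≤ s → ∀ x : X, p (T s x) ≤ C * q x

/-- `T` is a contraction semigroup: `‖T(t)‖ ≤ 1` for all `t ≥ 0`. -/
def ContractionSG (T : ℝ → X →ₗ[ℝ] X) : Prop :=
  ∀ s : ℝ, 0 ≤ s → ∀ x : X, ‖T s x‖ ≤ ‖x‖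

/-- `T` is `(‖·‖,τ)`-equitight with respect to the system of seminorms `Γτ` generating `τ`. -/
def EquitightSG (Γτ : Set (Seminorm ℝ X)) (T : ℝ → X →ₗ[ℝ] X) : Prop :=
  ∀ ε : ℝ, 0 < ε → ∀ p ∈ Γτ, ∃ q ∈ Γτ, ∃ C : ℝ, 0 ≤ C ∧
    ∀ s : ℝ, 0 ≤ s → ∀ x : X, p (T s x) ≤ C * q x + ε * ‖x‖

/-- `T` is a `τ`-bi-continuous semigroup. -/
def IsBiContSG (τ : TopologicalSpace X) (T : ℝ → X →ₗ[ℝ] X) : Prop :=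
  IsSemigroupOn τ T ∧
    (∃ M : ℝ, 1 ≤ M ∧ ∃ ω : ℝ, ∀ s : ℝ, 0 ≤ s → ∀ x : X,
      ‖T s x‖ ≤ M * Real.exp (ω * s) * ‖x‖) ∧
    ∀ (x : ℕ → X) (x₀ : X), (∃ C : ℝ, ∀ n, ‖x n‖ ≤ C) →
      Filter.Tendsto x atTop (@nhds X τ x₀) →
      ∀ t₀ : ℝ, 0 < t₀ → ∀ V ∈ @nhds X τ 0,
        ∃ N : ℕ, ∀ n ≥ N, ∀ s ∈ Set.Icc (0 : ℝ) t₀, T s (x n - x₀) ∈ V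

/-- `(A, D)` is the generator of the `τ`-bi-continuous semigroup `T`. -/
def IsGeneratorBi (τ : TopologicalSpace X) (T : ℝ → X →ₗ[ℝ] X)
    (D : Submodule ℝ X) (A : D →ₗ[ℝ] X) : Prop :=
  (∀ x : X, x ∈ D ↔
      ((∃ y : X, Filter.Tendsto (fun s : ℝ => s⁻¹ • (T s x - x)) (𝓝[>] (0 : ℝ))
          (@nhds X τ y)) ∧
        ∃ C : ℝ, ∀ s ∈ Set.Ioc (0 : ℝ) 1, ‖T s x - x‖ ≤ C * s)) ∧
    ∀ x : D, Filter.Tendsto (fun s : ℝ => s⁻¹ • (T s (x : X) - (x : X))) (𝓝[>] (0 : ℝ))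
      (@nhds X τ (A x))

/-- `(A, D)` is the generator of the `t`-strongly continuous semigroup `T` (locally convex
setting). -/
def IsGeneratorLC (t : TopologicalSpace X) (T : ℝ → X →ₗ[ℝ] X)
    (D : Submodule ℝ X) (A : D →ₗ[ℝ] X) : Prop :=
  (∀ x : X, x ∈ D ↔
      ∃ y : X, Filter.Tendsto (fun s : ℝ => s⁻¹ • (T s x - x)) (𝓝[>] (0 : ℝ)) (@nhds X t y)) ∧
    ∀ x : D, Filter.Tendsto (fun s : ℝ => s⁻¹ • (T s (x : X) - (x : X))) (𝓝[>] (0 : ℝ))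
      (@nhds X t (A x))

/-- `D` is bi-dense in `X`: every point is the `τ`-limit of a norm-bounded sequence in `D`. -/
def BiDenselyDefined (τ : TopologicalSpace X) (D : Submodule ℝ X) : Prop :=
  ∀ x : X, ∃ u : ℕ → D, (∃ C : ℝ, ∀ n, ‖(u n : X)‖ ≤ C) ∧
    Filter.Tendsto (fun n => (u n : X)) atTop (@nhds X τ x)

/-- The seminorms `|||x||| = sup_n p_n(x) a_n` with `(p_n) ⊆ Γτ` and `(a_n)` a non-negative
real null sequence; they generate the submixed topology `γ_s`. -/
def SubmixedSet (Γτ : Set (Seminorm ℝ X)) : Set (Seminorm ℝ X) :=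
  {q : Seminorm ℝ X | ∃ (pn : ℕ → Seminorm ℝ X) (an : ℕ → ℝ),
      (∀ n, pn n ∈ Γτ) ∧ (∀ n, 0 ≤ an n) ∧ Filter.Tendsto an atTop (nhds 0) ∧
      ∀ x : X, q x = ⨆ n : ℕ, pn n x * an n}

/-- The subfamily of submixed seminorms with coefficients `0 ≤ a_n ≤ 1`. -/
def SubmixedSetOne (Γτ : Set (Seminorm ℝ X)) : Set (Seminorm ℝ X) :=
  {q : Seminorm ℝ X | ∃ (pn : ℕ → Seminorm ℝ X) (an : ℕ → ℝ),
      (∀ n, pn n ∈ Γτ) ∧ (∀ n, 0 ≤ an n ∧ an n ≤ 1) ∧ Filter.Tendsto an atTop (nhds 0) ∧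
      ∀ x : X, q x = ⨆ n : ℕ, pn n x * an n}

/-- The dual norm of a linear functional (as the supremum over the closed unit ball). -/
noncomputable def dualNormF (f : X →ₗ[ℝ] ℝ) : ℝ :=
  ⨆ x : {x : X // ‖x‖ ≤ 1}, |f x|

/-- The weak topology `σ(X, (X,t)')`. -/
def weakTopOf (t : TopologicalSpace X) : TopologicalSpace X :=
  ⨅ f : {f : X →ₗ[ℝ] ℝ // @Continuous X ℝ t _ f},
    TopologicalSpace.induced (⇑f.1) inferInstance

/-- `(X,t)` is semi-reflexive: every `t`-(von Neumann-)bounded set is relatively compact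
for the weak topology `σ(X,(X,t)')`. -/
def SemiReflexiveTop (t : TopologicalSpace X) : Prop :=
  ∀ S : Set X, @Bornology.IsVonNBounded ℝ X _ _ _ t S →
    @IsCompact X (weakTopOf t) (@closure X (weakTopOf t) S)

/-- A set is sequentially open for the topology `t`. -/
def SeqOpenSet (t : TopologicalSpace X) (s : Set X) : Prop :=
  ∀ (u : ℕ → X) (x : X), x ∈ s → Filter.Tendsto u atTop (@nhds X t x) →
    ∀ᶠ n in atTop, u n ∈ s

/-- `(X,t)` is C-sequential: every convex sequentially open set is open. -/
def CSequentialTop (t : TopologicalSpace X) : Prop :=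
  ∀ s : Set X, Convex ℝ s → SeqOpenSet t s → @IsOpen X t s

end Defs

/-!
A null sequence is bounded, so dividing it by a bound `C ≥ 1` shows that every submixed
seminorm is dominated by `C` times one with coefficients in `[0, 1]`; the two families therefore
generate the same topology. The smaller family contains `Γτ` (take `aₙ = 1/(n+1)`) and each of
its members is bounded by the norm, which gives the norming property. Directedness comes from
interleaving the defining sequences of two seminorms.
-/

section Submixed

theorem ciSup_sum {α β γ : Type*} [ConditionallyCompleteLattice γ] [Nonempty α] [Nonempty β]
    {f : α ⊕ β → γ} (hf : BddAbove (range f)) :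
    ⨆ x, f x = (⨆ a, f (.inl a)) ⊔ ⨆ b, f (.inr b) := by
  refine le_antisymm (ciSup_le (Sum.forall.2 ⟨fun a => ?_, fun b => ?_⟩))
    (sup_le (ciSup_le fun a => le_ciSup hf _) (ciSup_le fun b => le_ciSup hf _))
  · exact le_sup_of_le_left (le_ciSup (hf.mono (range_comp_subset_range _ f)) a)
  · exact le_sup_of_le_right (le_ciSup (hf.mono (range_comp_subset_range _ f)) b)

theorem tendsto_sum_elim_cofinite {α β γ : Type*} {f : α → γ} {g : β → γ}
    {l : Filter γ} (hf : Tendsto f cofinite l) (hg : Tendsto g cofinite l) :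
    Tendsto (Sum.elim f g) cofinite l := by
  intro s hs
  refine (((hf hs).image Sum.inl).union ((hg hs).image Sum.inr)).subset ?_
  rintro (a | b) h
  · exact .inl ⟨a, h, rfl⟩
  · exact .inr ⟨b, h, rfl⟩

variable [NormedAddCommGroup X] [NormedSpace ℝ X]

theorem seminorm_topology_le_of_le_mul {p q : Seminorm ℝ X} {C : ℝ}
    (h : ∀ x, q x ≤ C * p x) :
    p.toSeminormedAddCommGroup.toUniformSpace.toTopologicalSpace ≤
      q.toSeminormedAddCommGroup.toUniformSpace.toTopologicalSpace :=
  continuous_id_iff_le.1 <|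
    @AddMonoidHomClass.continuous_of_bound _ _ _
      p.toSeminormedAddCommGroup.toSeminormedAddGroup
      q.toSeminormedAddCommGroup.toSeminormedAddGroup _ _ (AddMonoidHom.id X) C h

theorem GeneratesTop.of_subset_of_dominated {Γ Δ : Set (Seminorm ℝ X)} {t : TopologicalSpace X}
    (hΔ : GeneratesTop Δ t) (hsub : Γ ⊆ Δ)
    (hdom : ∀ q ∈ Δ, ∃ p ∈ Γ, ∃ C : ℝ, ∀ x, q x ≤ C * p x) : GeneratesTop Γ t := by
  refine ⟨fun p hp => hΔ.1 p (hsub hp), hΔ.2.trans (le_antisymm ?_ ?_)⟩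
  · exact le_iInf fun p => iInf_le_of_le ⟨p, hsub p.2⟩ le_rfl
  · refine le_iInf fun q => ?_
    obtain ⟨p, hp, C, hC⟩ := hdom q q.2
    exact iInf_le_of_le ⟨p, hp⟩ (seminorm_topology_le_of_le_mul hC)

theorem NormingSeminorms.le_norm {Γ : Set (Seminorm ℝ X)} (hΓ : NormingSeminorms Γ)
    {p : Seminorm ℝ X} (hp : p ∈ Γ) (x : X) : p x ≤ ‖x‖ := by
  by_cases hb : BddAbove (range fun q : Γ => (q : Seminorm ℝ X) x)
  · exact (hΓ x).symm ▸ le_ciSup hb ⟨p, hp⟩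
  · have hx : x = 0 := norm_eq_zero.1 ((hΓ x).trans (Real.iSup_of_not_bddAbove hb))
    simp [hx]

theorem NormingSeminorms.mono {Γ Δ : Set (Seminorm ℝ X)} (hΓ : NormingSeminorms Γ)
    (hsub : Γ ⊆ Δ) (hle : ∀ q ∈ Δ, ∀ x, q x ≤ ‖x‖) : NormingSeminorms Δ := by
  intro x
  have hbdd : BddAbove (range fun q : Δ => (q : Seminorm ℝ X) x) :=
    ⟨‖x‖, forall_mem_range.2 fun q => hle q q.2 x⟩
  refine le_antisymm ?_ (Real.iSup_le (fun q => hle q q.2 x) (norm_nonneg x))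
  rw [hΓ x]
  exact Real.iSup_le (fun p => le_ciSup hbdd ⟨p, hsub p.2⟩)
    (Real.iSup_nonneg fun q => apply_nonneg _ _)

theorem NormingSeminorms.mul_le_norm {Γ : Set (Seminorm ℝ X)} (hΓ : NormingSeminorms Γ)
    {p : Seminorm ℝ X} (hp : p ∈ Γ) {a : ℝ} (ha : a ≤ 1) (x : X) : p x * a ≤ ‖x‖ :=
  (mul_le_of_le_one_right (apply_nonneg p x) ha).trans (hΓ.le_norm hp x)

variable {Γτ : Set (Seminorm ℝ X)}

theorem submixedSetOne_subset_submixedSet : SubmixedSetOne Γτ ⊆ SubmixedSet Γτ :=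
  fun _ ⟨pn, an, hpn, han, hnull, hq⟩ => ⟨pn, an, hpn, fun n => (han n).1, hnull, hq⟩

theorem mem_submixedSetOne_of_equiv {ι : Type*} (e : ℕ ≃ ι) {pn : ι → Seminorm ℝ X}
    {an : ι → ℝ} (hpn : ∀ i, pn i ∈ Γτ) (han : ∀ i, 0 ≤ an i ∧ an i ≤ 1)
    (hnull : Tendsto an cofinite (𝓝 0)) {q : Seminorm ℝ X}
    (hq : ∀ x, q x = ⨆ i, pn i x * an i) : q ∈ SubmixedSetOne Γτ := by
  refine ⟨pn ∘ e, an ∘ e, fun n => hpn _, fun n => han _, ?_, fun x => ?_⟩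
  · rw [← Nat.cofinite_eq_atTop]
    exact hnull.comp e.injective.tendsto_cofinite
  · exact (hq x).trans (e.iSup_comp (g := fun i => pn i x * an i)).symm

theorem mem_submixedSetOne_of_mem {p : Seminorm ℝ X} (hp : p ∈ Γτ) :
    p ∈ SubmixedSetOne Γτ := by
  refine ⟨fun _ => p, fun n => 1 / (n + 1), fun _ => hp, fun n => ⟨by positivity, ?_⟩,
    tendsto_one_div_add_atTop_nhds_zero_nat, fun x => ?_⟩
  · exact div_le_one_of_le₀ (by simp) (by positivity)
  · have hle : ∀ n : ℕ, p x * (1 / (n + 1)) ≤ p x := fun n =>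
      mul_le_of_le_one_right (apply_nonneg p x) (div_le_one_of_le₀ (by simp) (by positivity))
    refine le_antisymm ?_ (ciSup_le hle)
    simpa using le_ciSup ⟨p x, forall_mem_range.2 hle⟩ 0

theorem NormingSeminorms.le_norm_of_mem_submixedSetOne (hN : NormingSeminorms Γτ)
    {q : Seminorm ℝ X} (hq : q ∈ SubmixedSetOne Γτ) (x : X) : q x ≤ ‖x‖ := by
  obtain ⟨pn, an, hpn, han, -, hqx⟩ := hq
  rw [hqx]
  exact Real.iSup_le (fun n => hN.mul_le_norm (hpn n) (han n).2 x) (norm_nonneg x)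

theorem directedSeminorms_submixedSetOne (hN : NormingSeminorms Γτ) :
    DirectedSeminorms (SubmixedSetOne Γτ) := by
  rintro q₁ ⟨p₁, a₁, hp₁, ha₁, hnull₁, hq₁⟩ q₂ ⟨p₂, a₂, hp₂, ha₂, hnull₂, hq₂⟩
  rw [← Nat.cofinite_eq_atTop] at hnull₁ hnull₂
  have hp : ∀ i, Sum.elim p₁ p₂ i ∈ Γτ := Sum.forall.2 ⟨hp₁, hp₂⟩
  have ha : ∀ i, 0 ≤ Sum.elim a₁ a₂ i ∧ Sum.elim a₁ a₂ i ≤ 1 := Sum.forall.2 ⟨ha₁, ha₂⟩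
  refine ⟨q₁ ⊔ q₂, mem_submixedSetOne_of_equiv Equiv.natSumNatEquivNat.symm hp ha
    (tendsto_sum_elim_cofinite hnull₁ hnull₂) fun x => ?_, le_sup_left, le_sup_right⟩
  have hbdd : BddAbove (range fun i => Sum.elim p₁ p₂ i x * Sum.elim a₁ a₂ i) :=
    ⟨‖x‖, forall_mem_range.2 fun i => hN.mul_le_norm (hp i) (ha i).2 x⟩
  rw [Seminorm.sup_apply, hq₁, hq₂, ciSup_sum hbdd]
  rfl

theorem exists_mem_submixedSetOne_le_mul {q : Seminorm ℝ X} (hq : q ∈ SubmixedSet Γτ) :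
    ∃ q' ∈ SubmixedSetOne Γτ, ∃ C : ℝ, ∀ x, q x ≤ C * q' x := by
  obtain ⟨pn, an, hpn, han, hnull, hqx⟩ := hq
  obtain ⟨M, hM⟩ := hnull.bddAbove_range
  set C : NNReal := max 1 M.toNNReal
  have hC : 0 < (C : ℝ) := lt_of_lt_of_le one_pos (le_max_left 1 _)
  have haC : ∀ n, an n ≤ C := fun n =>
    (hM ⟨n, rfl⟩).trans ((Real.le_coe_toNNReal M).trans (le_max_right _ _))
  refine ⟨C⁻¹ • q, ⟨pn, fun n => an n / C, hpn, fun n => ⟨by positivity [han n], ?_⟩,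
    by simpa using hnull.div_const (C : ℝ), fun x => ?_⟩, C, fun x => ?_⟩
  · exact div_le_one_of_le₀ (haC n) hC.le
  · simp only [smul_apply, NNReal.smul_def, NNReal.coe_inv, smul_eq_mul, hqx,
      Real.mul_iSup_of_nonneg (inv_nonneg.2 hC.le)]
    congr 1 with n
    ring
  · simp only [smul_apply, NNReal.smul_def, NNReal.coe_inv, smul_eq_mul]
    rw [mul_inv_cancel_left₀ hC.ne']

end Submixed

namespace Statements

open LumerPhillips Filter Topology Set

variable {X : Type*}

theorem statement1_general [NormedAddCommGroup X] [NormedSpace ℝ X]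
    (τ γs : TopologicalSpace X) (Γτ : Set (Seminorm ℝ X))
    (hSaks : IsSaksSystem τ Γτ)
    (hγs : GeneratesTop (SubmixedSet Γτ) γs) :
    DirectedSeminorms (SubmixedSetOne Γτ) ∧ GeneratesTop (SubmixedSetOne Γτ) γs ∧
      NormingSeminorms (SubmixedSetOne Γτ) := by
  have hN : NormingSeminorms Γτ := hSaks.2.2.2.2.2
  refine ⟨directedSeminorms_submixedSetOne hN, ?_, ?_⟩
  · exact hγs.of_subset_of_dominated submixedSetOne_subset_submixedSet
      fun q hq => exists_mem_submixedSetOne_le_mul hq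
  · exact hN.mono (fun _ => mem_submixedSetOne_of_mem)
      fun q hq => hN.le_norm_of_mem_submixedSetOne hq

theorem statement1 [NormedAddCommGroup X] [NormedSpace ℝ X] [CompleteSpace X]
    (τ γs : TopologicalSpace X) (Γτ : Set (Seminorm ℝ X))
    (hSaks : IsSaksSystem τ Γτ)
    (hγs : GeneratesTop (SubmixedSet Γτ) γs) :
    DirectedSeminorms (SubmixedSetOne Γτ) ∧ GeneratesTop (SubmixedSetOne Γτ) γs ∧
      NormingSeminorms (SubmixedSetOne Γτ) :=
  statement1_general τ γs Γτ hSaks hγs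

end Statements
end LumerPhillips
end

section
/- Let (X,‖·‖,τ) be a sequentially complete Saks space with mixed topology γ, Γ_γ a directed system of continuous seminorms generating γ, and (A,D(A)) a Γ_γ-dissipative linear operator on X. Then λ−A is surjective for some λ>0 if and only if λ−A is surjective for all λ>0; in this case (0,∞) ⊆ ρ_γ(A), i.e. for every λ>0 the map λ−A : D(A)→X is bijective and (λ−A)^{-1} is γ-continuous. -/
open Filter Topology Set

namespace LumerPhillips

variable {X : Type*}

/-!
Dissipativity gives `p (x) ≤ λ⁻¹ p ((λ - A) x)` for every `p ∈ Γγ`, so `λ - A` is injective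
(the seminorms separate points because `γ` is Hausdorff) and, once it is surjective, its inverse
`R(λ)` satisfies `p (R(λ) y) ≤ λ⁻¹ p (y)`, hence is `γ`-continuous. If `λ₀ - A` is surjective and
`|λ - λ₀| < λ₀`, then solving `(λ - A) x = y` amounts to finding a fixed point of
`z ↦ y + (λ₀ - λ) R(λ₀) z`, a contraction for every `p ∈ Γγ` with constant `|λ - λ₀| / λ₀ < 1`;
its Picard iterates are `γ`-Cauchy and converge by sequential completeness. Surjectivity thus
propagates from `λ₀` to `(0, 2λ₀)`, and by iteration to all of `(0, ∞)`.
-/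

theorem _root_.Seminorm.tendsto_sub_of_le_geometric {E : Type*} [AddCommGroup E] [Module ℝ E]
    (p : Seminorm ℝ E) {u : ℕ → E} {C r : ℝ} (hr : r < 1)
    (hu : ∀ n, p (u (n + 1) - u n) ≤ C * r ^ n) :
    Tendsto (fun mn : ℕ × ℕ => p (u mn.1 - u mn.2)) atTop (𝓝 0) := by
  let := p.toSeminormedAddCommGroup
  have hcauchy : CauchySeq u := cauchySeq_of_le_geometric r C hr fun n => by
    rw [dist_comm, dist_eq_norm]; exact hu n
  have hdist := cauchySeq_iff_tendsto_dist_atTop_0.1 hcauchy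
  simp only [dist_eq_norm] at hdist
  exact hdist

section SeminormTopology

variable [NormedAddCommGroup X] [NormedSpace ℝ X] {Γ : Set (Seminorm ℝ X)}
  {t : TopologicalSpace X}

theorem GeneratesTop.withSeminorms (hgen : GeneratesTop Γ t) :
    @WithSeminorms ℝ X Γ _ _ _ (fun p => p.1) t := by
  obtain ⟨-, rfl⟩ := hgen
  have := topologicalAddGroup_iInf (G := X) (ts' := fun p : Γ =>
      (p : Seminorm ℝ X).toSeminormedAddCommGroup.toUniformSpace.toTopologicalSpace)
    fun p => (p : Seminorm ℝ X).toSeminormedAddCommGroup.toIsTopologicalAddGroup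
  exact (SeminormFamily.withSeminorms_iff_topologicalSpace_eq_iInf (t := _) _).2 rfl

theorem GeneratesTop.cauchySeqTop (hgen : GeneratesTop Γ t) {u : ℕ → X}
    (hu : ∀ p ∈ Γ, Tendsto (fun mn : ℕ × ℕ => p (u mn.1 - u mn.2)) atTop (𝓝 0)) :
    CauchySeqTop t u := by
  intro V hV
  obtain ⟨⟨s, ε⟩, hε, hball⟩ := hgen.withSeminorms.hasBasis_zero_ball.mem_iff.1 hV
  have hsmall : ∀ᶠ mn : ℕ × ℕ in atTop, ∀ p ∈ s, (p : Seminorm ℝ X) (u mn.1 - u mn.2) < ε :=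
    s.eventually_all.2 fun p _ => (tendsto_order.1 (hu p p.2)).2 ε hε
  rw [eventually_atTop_prod_self'] at hsmall
  obtain ⟨N, hN⟩ := hsmall
  exact ⟨N, fun m hm n hn =>
    hball ((Seminorm.mem_ball_zero _).2 (Seminorm.finset_sup_apply_lt hε (hN m hm n hn)))⟩

theorem GeneratesTop.exists_fixedPoint (hgen : GeneratesTop Γ t) (ht : @T2Space X t)
    (hseq : SeqCompleteTop t) {f : X → X} {r : ℝ} (hr0 : 0 ≤ r) (hr1 : r < 1)
    (hf : ∀ p ∈ Γ, ∀ a b, p (f a - f b) ≤ r * p (a - b)) : ∃ z, f z = z := by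
  set u : ℕ → X := fun n => f^[n] 0
  have hsucc (n : ℕ) : u (n + 1) = f (u n) := Function.iterate_succ_apply' f n 0
  have hgeom (p) (hp : p ∈ Γ) (n : ℕ) : p (u (n + 1) - u n) ≤ p (u 1 - u 0) * r ^ n := by
    induction n with
    | zero => simp
    | succ n ih =>
      calc p (u (n + 1 + 1) - u (n + 1)) = p (f (u (n + 1)) - f (u n)) := by
            rw [hsucc, hsucc n]
        _ ≤ r * p (u (n + 1) - u n) := hf p hp _ _
        _ ≤ r * (p (u 1 - u 0) * r ^ n) := by gcongr
        _ = p (u 1 - u 0) * r ^ (n + 1) := by ring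
  obtain ⟨z, hz⟩ :=
    hseq u (hgen.cauchySeqTop fun p hp => p.tendsto_sub_of_le_geometric hr1 (hgeom p hp))
  have hfz : Tendsto (fun n => f (u n)) atTop (@nhds X t (f z)) := by
    rw [hgen.withSeminorms.tendsto_nhds] at hz ⊢
    intro p ε hε
    filter_upwards [hz p ε hε] with n hn
    exact (hf p p.2 _ _).trans_lt ((mul_le_of_le_one_left (apply_nonneg _ _) hr1.le).trans_lt hn)
  refine ⟨z, tendsto_nhds_unique ?_ (hz.comp (tendsto_add_atTop_nat 1))⟩
  simpa only [Function.comp_def, hsucc] using hfz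

theorem GeneratesTop.continuous_of_seminorm_le (hgen : GeneratesTop Γ t) (f : X →ₗ[ℝ] X)
    {C : ℝ} (hf : ∀ p ∈ Γ, ∀ x, p (f x) ≤ C * p x) : @Continuous X X t t f :=
  WithSeminorms.continuous_of_isBounded hgen.withSeminorms hgen.withSeminorms f <|
    Seminorm.IsBounded.of_real fun p => ⟨{p}, C, fun x => by simpa using hf p p.2 x⟩

end SeminormTopology

theorem forall_pos_of_lt_two_mul {P : ℝ → Prop}
    (hP : ∀ l₀ l, 0 < l₀ → P l₀ → 0 < l → l < 2 * l₀ → P l) {l₀ : ℝ} (hl₀ : 0 < l₀)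
    (h : P l₀) (l : ℝ) (hl : 0 < l) : P l := by
  have hpow (n : ℕ) : P ((3 / 2) ^ n * l₀) := by
    induction n with
    | zero => simpa using h
    | succ n ih =>
      refine hP _ _ (by positivity) ih (by positivity) ?_
      rw [pow_succ]
      nlinarith [pow_pos (by norm_num : (0 : ℝ) < 3 / 2) n]
  obtain ⟨n, hn⟩ := pow_unbounded_of_one_lt (l / l₀) (by norm_num : (1 : ℝ) < 3 / 2)
  rw [div_lt_iff₀ hl₀] at hn
  exact hP _ _ (by positivity) (hpow n) hl (by nlinarith [pow_pos (by norm_num : (0 : ℝ) < 3 / 2) n])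

section Dissipative

variable [NormedAddCommGroup X] [NormedSpace ℝ X] {Γ : Set (Seminorm ℝ X)}
  {t : TopologicalSpace X} {D : Submodule ℝ X} {A : D →ₗ[ℝ] X} {l : ℝ}

variable (D A l) in
def lmapₗ : D →ₗ[ℝ] X := l • D.subtype - A

@[simp]
theorem coe_lmapₗ : ⇑(lmapₗ D A l) = lmap D A l := rfl

theorem lmap_sub_lmap (l₀ : ℝ) (x : D) : lmap D A l x - lmap D A l₀ x = (l - l₀) • (x : X) := by
  simp only [lmap]
  module

noncomputable def resolvent (hbij : Function.Bijective (lmap D A l)) : X ≃ₗ[ℝ] D :=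
  (LinearEquiv.ofBijective (lmapₗ D A l) hbij).symm

theorem lmap_resolvent (hbij : Function.Bijective (lmap D A l)) (y : X) :
    lmap D A l (resolvent hbij y) = y :=
  (LinearEquiv.ofBijective (lmapₗ D A l) hbij).apply_symm_apply y

theorem resolvent_lmap (hbij : Function.Bijective (lmap D A l)) (x : D) :
    resolvent hbij (lmap D A l x) = x :=
  (LinearEquiv.ofBijective (lmapₗ D A l) hbij).symm_apply_apply x

theorem GammaDissipative.seminorm_le (hdiss : GammaDissipative Γ D A) (hl : 0 < l) (x : D)
    {p : Seminorm ℝ X} (hp : p ∈ Γ) : p x ≤ l⁻¹ * p (lmap D A l x) :=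
  (le_inv_mul_iff₀ hl).2 (hdiss l hl x p hp)

theorem GammaDissipative.injective (hdiss : GammaDissipative Γ D A) (hgen : GeneratesTop Γ t)
    (ht : @T1Space X t) (hl : 0 < l) : Function.Injective (lmap D A l) := by
  rw [← coe_lmapₗ, injective_iff_map_eq_zero]
  intro x hx
  by_contra hne
  obtain ⟨p, hp⟩ := hgen.withSeminorms.separating_of_T1 (x : X) (by simpa using hne)
  have hle := hdiss.seminorm_le hl x p.2
  rw [← coe_lmapₗ, hx, map_zero, mul_zero] at hle
  exact hp (le_antisymm hle (apply_nonneg _ _))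

theorem GammaDissipative.seminorm_resolvent_le (hdiss : GammaDissipative Γ D A) (hl : 0 < l)
    (hbij : Function.Bijective (lmap D A l)) {p : Seminorm ℝ X} (hp : p ∈ Γ) (y : X) :
    p (resolvent hbij y) ≤ l⁻¹ * p y := by
  simpa only [lmap_resolvent] using hdiss.seminorm_le hl (resolvent hbij y) hp

theorem GammaDissipative.continuous_resolvent (hdiss : GammaDissipative Γ D A)
    (hgen : GeneratesTop Γ t) (hl : 0 < l) (hbij : Function.Bijective (lmap D A l)) :
    @Continuous X X t t fun y => (resolvent hbij y : X) :=
  hgen.continuous_of_seminorm_le (D.subtype ∘ₗ (resolvent hbij).toLinearMap)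
    fun _ hp => hdiss.seminorm_resolvent_le hl hbij hp

theorem GammaDissipative.surjective_of_lt_two_mul (hdiss : GammaDissipative Γ D A)
    (hgen : GeneratesTop Γ t) (ht : @T2Space X t) (hseq : SeqCompleteTop t) {l₀ : ℝ}
    (hl₀ : 0 < l₀) (hs : Function.Surjective (lmap D A l₀)) (hl : 0 < l) (hll : l < 2 * l₀) :
    Function.Surjective (lmap D A l) := by
  have hbij : Function.Bijective (lmap D A l₀) := ⟨hdiss.injective hgen inferInstance hl₀, hs⟩
  intro y
  set R : X → X := fun z => resolvent hbij z
  have hcontr (p) (hp : p ∈ Γ) (a b : X) :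
      p ((y + (l₀ - l) • R a) - (y + (l₀ - l) • R b)) ≤ |l₀ - l| / l₀ * p (a - b) := by
    have hRsub : R a - R b = R (a - b) := by simp [R]
    rw [add_sub_add_left_eq_sub, ← smul_sub, hRsub, map_smul_eq_mul, Real.norm_eq_abs]
    calc |l₀ - l| * p (R (a - b)) ≤ |l₀ - l| * (l₀⁻¹ * p (a - b)) := by
          gcongr; exact hdiss.seminorm_resolvent_le hl₀ hbij hp _
      _ = |l₀ - l| / l₀ * p (a - b) := by ring
  obtain ⟨z, hz⟩ := hgen.exists_fixedPoint ht hseq (by positivity)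
    (by rw [div_lt_one hl₀, abs_lt]; constructor <;> linarith) hcontr
  refine ⟨resolvent hbij z, ?_⟩
  rw [← sub_add_cancel (lmap D A l _) (lmap D A l₀ _), lmap_sub_lmap, lmap_resolvent]
  nth_rw 2 [← hz]
  simp only [R]
  module

end Dissipative


namespace Statements

open LumerPhillips Filter Topology Set

variable {X : Type*}

theorem statement7_general [NormedAddCommGroup X] [NormedSpace ℝ X]
    (τ γ : TopologicalSpace X) (Γτ Γγ : Set (Seminorm ℝ X))
    (hSaks : IsSaksSystem τ Γτ) (hmixed : IsMixedTopology τ γ) (hseq : SeqCompleteTop γ)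
    (hgen : GeneratesTop Γγ γ)
    (D : Submodule ℝ X) (A : D →ₗ[ℝ] X)
    (hdiss : GammaDissipative Γγ D A) :
    ((∃ l : ℝ, 0 < l ∧ Function.Surjective (lmap D A l)) ↔
        ∀ l : ℝ, 0 < l → Function.Surjective (lmap D A l)) ∧
      ((∃ l : ℝ, 0 < l ∧ Function.Surjective (lmap D A l)) →
        ∀ l : ℝ, 0 < l → Function.Bijective (lmap D A l) ∧
          ∃ g : X → X, @Continuous X X γ γ g ∧ (∀ x : D, g (lmap D A l x) = (x : X)) ∧
            ∀ y : X, ∃ hy : g y ∈ D, lmap D A l ⟨g y, hy⟩ = y) := by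
  have ht : @T2Space X γ := t2Space_antitone hmixed.1.2.1 hSaks.1
  have hsurj : (∃ l : ℝ, 0 < l ∧ Function.Surjective (lmap D A l)) →
      ∀ l : ℝ, 0 < l → Function.Surjective (lmap D A l) := fun ⟨l₀, hl₀, hs⟩ =>
    forall_pos_of_lt_two_mul
      (fun _ _ hl₀ hs hl hll => hdiss.surjective_of_lt_two_mul hgen ht hseq hl₀ hs hl hll) hl₀ hs
  refine ⟨⟨hsurj, fun h => ⟨1, one_pos, h 1 one_pos⟩⟩, fun hex l hl => ?_⟩
  have hbij : Function.Bijective (lmap D A l) := ⟨hdiss.injective hgen inferInstance hl, hsurj hex l hl⟩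
  exact ⟨hbij, _, hdiss.continuous_resolvent hgen hl hbij,
    fun x => congrArg Subtype.val (resolvent_lmap hbij x), fun y => ⟨_, lmap_resolvent hbij y⟩⟩

theorem statement7 [NormedAddCommGroup X] [NormedSpace ℝ X] [CompleteSpace X]
    (τ γ : TopologicalSpace X) (Γτ Γγ : Set (Seminorm ℝ X))
    (hSaks : IsSaksSystem τ Γτ) (hmixed : IsMixedTopology τ γ) (hseq : SeqCompleteTop γ)
    (hdir : DirectedSeminorms Γγ) (hgen : GeneratesTop Γγ γ)
    (D : Submodule ℝ X) (A : D →ₗ[ℝ] X)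
    (hdiss : GammaDissipative Γγ D A) :
    ((∃ l : ℝ, 0 < l ∧ Function.Surjective (lmap D A l)) ↔
        ∀ l : ℝ, 0 < l → Function.Surjective (lmap D A l)) ∧
      ((∃ l : ℝ, 0 < l ∧ Function.Surjective (lmap D A l)) →
        ∀ l : ℝ, 0 < l → Function.Bijective (lmap D A l) ∧
          ∃ g : X → X, @Continuous X X γ γ g ∧ (∀ x : D, g (lmap D A l x) = (x : X)) ∧
            ∀ y : X, ∃ hy : g y ∈ D, lmap D A l ⟨g y, hy⟩ = y) :=
  statement7_general τ γ Γτ Γγ hSaks hmixed hseq hgen D A hdiss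

end Statements
end LumerPhillips
end
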